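/- arXiv:1504.07323 — 4 statements merged into one kernel-verified Lean document; each statement's English description precedes it below -/
import Mathlib

section
/- Let K₁, K₂, M₁, M₂ be complex Hilbert spaces and let A : K₁ → K₂, B : M₁ → K₂, C : K₁ → M₂, D : M₁ → M₂ be bounded linear operators such that the block operator V : K₁ ⊕ M₁ → K₂ ⊕ M₂ defined by V(k, m) = (A k + B m, C k + D m) is an isometry. Let Z : M₂ → M₁ be a bounded linear operator with ‖Z‖ < 1. Then 1 − D Z is an invertible element of B(M₂), and the operator F = A + B Z (1 − D Z)⁻¹ C : K₁ → K₂ satisfies the identity 1 − F* F = C* (1 − Z* D*)⁻¹ (1 − Z* Z) (1 − D Z)⁻¹ C. -/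
/-!
Write `W = (1 - D Z)⁻¹` (which exists because `‖D‖ ≤ 1` and `‖Z‖ < 1`) and `G = Z W C`, so `F = A + B G`.
Since `V` is an isometry, the Gram operator of `V ∘ (1, G)` is `1 + G* G`, i.e.
`F* F + (C + D G)* (C + D G) = 1 + G* G`. The resolvent identity `W = 1 + D Z W` gives
`C + D G = W C`, hence `1 - F* F = (W C)* (W C) - (Z W C)* (Z W C) = C* W* (1 - Z* Z) W C`,
and `W* = (1 - Z* D*)⁻¹`.
-/

open ContinuousLinearMap
open scoped InnerProduct InnerProductSpace

section Isometry

variable {𝕜 E E' F G : Type*} [RCLike 𝕜]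
  [NormedAddCommGroup E] [InnerProductSpace 𝕜 E] [CompleteSpace E]
  [NormedAddCommGroup E'] [InnerProductSpace 𝕜 E']
  [NormedAddCommGroup F] [InnerProductSpace 𝕜 F] [CompleteSpace F]
  [NormedAddCommGroup G] [InnerProductSpace 𝕜 G] [CompleteSpace G]

theorem adjoint_comp_add_adjoint_comp_eq_one {S : E →L[𝕜] F} {T : E →L[𝕜] G}
    (h : ∀ x, ‖S x‖ ^ 2 + ‖T x‖ ^ 2 = ‖x‖ ^ 2) : S† ∘L S + T† ∘L T = 1 := by
  have hsymm : ((S† ∘L S + T† ∘L T - 1 : E →L[𝕜] E) : E →ₗ[𝕜] E).IsSymmetric := by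
    refine IsSelfAdjoint.isSymmetric (isSelfAdjoint_iff'.mpr ?_)
    simp only [map_sub, map_add, adjoint_comp, adjoint_adjoint]
    rw [← star_eq_adjoint, star_one]
  have hzero := hsymm.inner_map_self_eq_zero.mp fun x => by
    simp only [coe_coe, sub_apply, add_apply, comp_apply, one_def, coe_id', id_eq,
      inner_sub_left, inner_add_left, adjoint_inner_left, inner_self_eq_norm_sq_to_K]
    exact_mod_cast sub_eq_zero.mpr (h x)
  exact sub_eq_zero.mp (coe_injective hzero)

theorem adjoint_comp_add_adjoint_comp_eq_zero {A : E →L[𝕜] F} {B : E' →L[𝕜] F}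
    {C : E →L[𝕜] G} {D : E' →L[𝕜] G}
    (h : ∀ k m, ‖A k + B m‖ ^ 2 + ‖C k + D m‖ ^ 2 = ‖k‖ ^ 2 + ‖m‖ ^ 2) :
    A† ∘L B + C† ∘L D = 0 := by
  have hre : ∀ k m, RCLike.re ⟪k, (A† ∘L B + C† ∘L D) m⟫_𝕜 = 0 := fun k m => by
    have hk := h k 0
    have hm := h 0 m
    have hkm := h k m
    simp only [map_zero, add_zero, zero_add, norm_zero] at hk hm
    rw [@norm_add_sq 𝕜, @norm_add_sq 𝕜] at hkm
    simp only [add_apply, comp_apply, inner_add_right, adjoint_inner_right, map_add]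
    linarith
  ext m
  simpa using hre ((A† ∘L B + C† ∘L D) m) m

end Isometry

section Colligation

variable {𝕜 K₁ K₂ M₁ M₂ : Type*} [RCLike 𝕜]
  [NormedAddCommGroup K₁] [InnerProductSpace 𝕜 K₁] [CompleteSpace K₁]
  [NormedAddCommGroup K₂] [InnerProductSpace 𝕜 K₂] [CompleteSpace K₂]
  [NormedAddCommGroup M₁] [InnerProductSpace 𝕜 M₁] [CompleteSpace M₁]
  [NormedAddCommGroup M₂] [InnerProductSpace 𝕜 M₂] [CompleteSpace M₂]
  {A : K₁ →L[𝕜] K₂} {B : M₁ →L[𝕜] K₂} {C : K₁ →L[𝕜] M₂} {D : M₁ →L[𝕜] M₂}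

/-- The Gram operator of `V ∘ (1, X)` for an isometric block operator `V = [A B; C D]`. -/
theorem adjoint_comp_self_add_adjoint_comp_self_eq_one_add
    (hAC : A† ∘L A + C† ∘L C = 1) (hBD : B† ∘L B + D† ∘L D = 1)
    (hAB : A† ∘L B + C† ∘L D = 0) (X : K₁ →L[𝕜] M₁) :
    (A + B ∘L X)† ∘L (A + B ∘L X) + (C + D ∘L X)† ∘L (C + D ∘L X) = 1 + X† ∘L X := by
  have hBA : B† ∘L A + D† ∘L C = 0 := by
    simpa only [map_add, adjoint_comp, adjoint_adjoint, map_zero] using congrArg adjoint hAB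
  calc (A + B ∘L X)† ∘L (A + B ∘L X) + (C + D ∘L X)† ∘L (C + D ∘L X)
      = (A† ∘L A + C† ∘L C) + (A† ∘L B + C† ∘L D) ∘L X + X† ∘L (B† ∘L A + D† ∘L C)
          + X† ∘L (B† ∘L B + D† ∘L D) ∘L X := by
        simp only [map_add, adjoint_comp, add_comp, comp_add, comp_assoc]
        abel
    _ = 1 + X† ∘L X := by
        rw [hAC, hBD, hAB, hBA]
        simp only [zero_comp, comp_zero, add_zero, one_def, id_comp]

end Colligation

theorem Ring.inverse_one_sub_eq_one_add_mul {R : Type*} [Ring R] {x : R} (hx : IsUnit (1 - x)) :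
    Ring.inverse (1 - x) = 1 + x * Ring.inverse (1 - x) := by
  have h := Ring.mul_inverse_cancel _ hx
  rwa [sub_mul, one_mul, sub_eq_iff_eq_add] at h

/-- Key algebraic identity behind Theorem 3.3(iii): if the block operator
`V(k, m) = (A k + B m, C k + D m)` from `K₁ ⊕ M₁` to `K₂ ⊕ M₂` (with ℓ²-norms on the
direct sums) is an isometry, and `‖Z‖ < 1`, then `1 - D Z` is invertible and
`F = A + B Z (1 - D Z)⁻¹ C` satisfies
`1 - F* F = C* (1 - Z* D*)⁻¹ (1 - Z* Z) (1 - D Z)⁻¹ C`. -/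
theorem stmt_0 {K₁ K₂ M₁ M₂ : Type*}
    [NormedAddCommGroup K₁] [InnerProductSpace ℂ K₁] [CompleteSpace K₁]
    [NormedAddCommGroup K₂] [InnerProductSpace ℂ K₂] [CompleteSpace K₂]
    [NormedAddCommGroup M₁] [InnerProductSpace ℂ M₁] [CompleteSpace M₁]
    [NormedAddCommGroup M₂] [InnerProductSpace ℂ M₂] [CompleteSpace M₂]
    (A : K₁ →L[ℂ] K₂) (B : M₁ →L[ℂ] K₂) (C : K₁ →L[ℂ] M₂) (D : M₁ →L[ℂ] M₂)
    (hV : ∀ (k : K₁) (m : M₁),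
      ‖A k + B m‖ ^ 2 + ‖C k + D m‖ ^ 2 = ‖k‖ ^ 2 + ‖m‖ ^ 2)
    (Z : M₂ →L[ℂ] M₁) (hZ : ‖Z‖ < 1) :
    IsUnit (1 - D ∘L Z) ∧
    ∀ F : K₁ →L[ℂ] K₂,
      F = A + B ∘L Z ∘L Ring.inverse (1 - D ∘L Z) ∘L C →
      1 - adjoint F ∘L F =
        adjoint C ∘L Ring.inverse (1 - adjoint Z ∘L adjoint D) ∘L
          (1 - adjoint Z ∘L Z) ∘L Ring.inverse (1 - D ∘L Z) ∘L C := by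
  have hBD : ∀ m, ‖B m‖ ^ 2 + ‖D m‖ ^ 2 = ‖m‖ ^ 2 := fun m => by simpa using hV 0 m
  have hD : ‖D‖ ≤ 1 := opNorm_le_bound D zero_le_one fun m => by
    nlinarith [hBD m, norm_nonneg (D m), norm_nonneg m, sq_nonneg ‖B m‖]
  have hu : IsUnit (1 - D ∘L Z) := isUnit_one_sub_of_norm_lt_one <|
    (opNorm_comp_le D Z).trans_lt (by nlinarith [norm_nonneg Z])
  refine ⟨hu, fun F hF => ?_⟩
  set W := Ring.inverse (1 - D ∘L Z)
  have hW : C + D ∘L (Z ∘L W ∘L C) = W ∘L C := by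
    have hresolvent : W = 1 + D ∘L Z * W := Ring.inverse_one_sub_eq_one_add_mul hu
    conv_rhs => rw [hresolvent]
    simp only [add_comp, one_def, id_comp, mul_def, comp_assoc]
  have hW_adj : Ring.inverse (1 - Z† ∘L D†) = W† := by
    rw [← adjoint_comp, ← star_eq_adjoint, ← star_one, ← star_sub, Ring.inverse_star,
      star_eq_adjoint]
  have hgram := adjoint_comp_self_add_adjoint_comp_self_eq_one_add
    (adjoint_comp_add_adjoint_comp_eq_one fun k => by simpa using hV k 0)
    (adjoint_comp_add_adjoint_comp_eq_one hBD) (adjoint_comp_add_adjoint_comp_eq_zero hV)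
    (Z ∘L W ∘L C)
  rw [hW, ← hF] at hgram
  have hdefect : 1 - F† ∘L F = (W ∘L C)† ∘L (W ∘L C) - (Z ∘L W ∘L C)† ∘L (Z ∘L W ∘L C) := by
    linear_combination (norm := abel) -hgram
  rw [hW_adj, hdefect]
  simp only [adjoint_comp, sub_comp, comp_sub, one_def, id_comp, comp_assoc]
end

section
/- Let K₁, K₂, M₁, M₂ be complex Hilbert spaces and let A : K₁ → K₂, B : M₁ → K₂, C : K₁ → M₂, D : M₁ → M₂ be bounded linear operators such that the block operator V : K₁ ⊕ M₁ → K₂ ⊕ M₂ defined by V(k, m) = (A k + B m, C k + D m) is an isometry. Let Z : M₂ → M₁ be a bounded linear operator with ‖Z‖ < 1. Then 1 − D Z is invertible in B(M₂) and the operator F = A + B Z (1 − D Z)⁻¹ C : K₁ → K₂ satisfies ‖F‖ ≤ 1. -/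
/-!
Feed the output `x = (1 - D Z)⁻¹ C k` of the feedback loop back into the block operator:
`m = Z x` solves `C k + D m = x`, so the isometry gives
`‖F k‖² + ‖x‖² = ‖k‖² + ‖m‖²`, and `‖m‖ ≤ ‖x‖` yields `‖F k‖ ≤ ‖k‖`.
Taking `k = 0` shows `‖D‖ ≤ 1`, so `‖D Z‖ < 1` and `1 - D Z` is invertible by the Neumann series.
-/

open ContinuousLinearMap

lemma norm_le_of_sq_add_sq_le {E F G H : Type*} [SeminormedAddCommGroup E]
    [SeminormedAddCommGroup F] [SeminormedAddCommGroup G] [SeminormedAddCommGroup H]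
    {a : E} {x : F} {k : G} {m : H}
    (h : ‖a‖ ^ 2 + ‖x‖ ^ 2 ≤ ‖k‖ ^ 2 + ‖m‖ ^ 2) (hm : ‖m‖ ≤ ‖x‖) : ‖a‖ ≤ ‖k‖ := by
  have hsq : ‖a‖ ^ 2 ≤ ‖k‖ ^ 2 := by nlinarith [norm_nonneg m]
  exact sq_le_sq₀ (norm_nonneg a) (norm_nonneg k) |>.mp hsq

section BlockContraction

variable {𝕜 K₁ K₂ M₁ M₂ : Type*} [NontriviallyNormedField 𝕜]
  [SeminormedAddCommGroup K₁] [NormedSpace 𝕜 K₁] [SeminormedAddCommGroup K₂] [NormedSpace 𝕜 K₂]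
  [SeminormedAddCommGroup M₁] [NormedSpace 𝕜 M₁] [SeminormedAddCommGroup M₂] [NormedSpace 𝕜 M₂]
  {A : K₁ →L[𝕜] K₂} {B : M₁ →L[𝕜] K₂} {C : K₁ →L[𝕜] M₂} {D : M₁ →L[𝕜] M₂}

lemma opNorm_le_one_of_block_contraction
    (hV : ∀ k m, ‖A k + B m‖ ^ 2 + ‖C k + D m‖ ^ 2 ≤ ‖k‖ ^ 2 + ‖m‖ ^ 2) : ‖D‖ ≤ 1 := by
  refine opNorm_le_bound D zero_le_one fun m => ?_
  have h := hV 0 m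
  simp only [map_zero, zero_add, norm_zero] at h
  have hsq : ‖D m‖ ^ 2 ≤ ‖m‖ ^ 2 := by nlinarith [sq_nonneg ‖B m‖]
  rw [one_mul]
  exact sq_le_sq₀ (norm_nonneg _) (norm_nonneg _) |>.mp hsq

lemma norm_feedback_le_one
    (hV : ∀ k m, ‖A k + B m‖ ^ 2 + ‖C k + D m‖ ^ 2 ≤ ‖k‖ ^ 2 + ‖m‖ ^ 2)
    {Z : M₂ →L[𝕜] M₁} (hZ : ‖Z‖ ≤ 1) (hU : IsUnit (1 - D ∘L Z)) :
    ‖A + B ∘L Z ∘L Ring.inverse (1 - D ∘L Z) ∘L C‖ ≤ 1 := by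
  refine opNorm_le_bound _ zero_le_one fun k => ?_
  set x := Ring.inverse (1 - D ∘L Z) (C k)
  have hx : C k + D (Z x) = x :=
    eq_sub_iff_add_eq.mp congr($(Ring.mul_inverse_cancel _ hU) (C k)).symm
  have hZx : ‖Z x‖ ≤ ‖x‖ := by simpa using Z.le_of_opNorm_le hZ x
  rw [one_mul]
  have h := hV k (Z x)
  rw [hx] at h
  exact norm_le_of_sq_add_sq_le h hZx

end BlockContraction

theorem stmt_1_general {K₁ K₂ M₁ M₂ : Type*}
    [NormedAddCommGroup K₁] [InnerProductSpace ℂ K₁]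
    [NormedAddCommGroup K₂] [InnerProductSpace ℂ K₂]
    [NormedAddCommGroup M₁] [InnerProductSpace ℂ M₁]
    [NormedAddCommGroup M₂] [InnerProductSpace ℂ M₂] [CompleteSpace M₂]
    (A : K₁ →L[ℂ] K₂) (B : M₁ →L[ℂ] K₂) (C : K₁ →L[ℂ] M₂) (D : M₁ →L[ℂ] M₂)
    (hV : ∀ (k : K₁) (m : M₁),
      ‖A k + B m‖ ^ 2 + ‖C k + D m‖ ^ 2 = ‖k‖ ^ 2 + ‖m‖ ^ 2)
    (Z : M₂ →L[ℂ] M₁) (hZ : ‖Z‖ < 1) :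
    IsUnit (1 - D ∘L Z) ∧
      ‖A + B ∘L Z ∘L Ring.inverse (1 - D ∘L Z) ∘L C‖ ≤ 1 := by
  have hV' : ∀ k m, ‖A k + B m‖ ^ 2 + ‖C k + D m‖ ^ 2 ≤ ‖k‖ ^ 2 + ‖m‖ ^ 2 :=
    fun k m => (hV k m).le
  have hDZ : ‖D ∘L Z‖ < 1 :=
    (opNorm_comp_le D Z).trans_lt <| mul_lt_one_of_nonneg_of_lt_one_right
      (opNorm_le_one_of_block_contraction hV') (norm_nonneg Z) hZ
  have hU : IsUnit (1 - D ∘L Z) := isUnit_one_sub_of_norm_lt_one hDZ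
  exact ⟨hU, norm_feedback_le_one hV' hZ.le hU⟩

/-- Theorem 3.3(iii) (contractivity): if the block operator
`V(k, m) = (A k + B m, C k + D m)` from `K₁ ⊕ M₁` to `K₂ ⊕ M₂` (with ℓ²-norms on the
direct sums) is an isometry, and `‖Z‖ < 1`, then `1 - D Z` is invertible and
`F = A + B Z (1 - D Z)⁻¹ C` satisfies `‖F‖ ≤ 1`. -/
theorem stmt_1 {K₁ K₂ M₁ M₂ : Type*}
    [NormedAddCommGroup K₁] [InnerProductSpace ℂ K₁] [CompleteSpace K₁]
    [NormedAddCommGroup K₂] [InnerProductSpace ℂ K₂] [CompleteSpace K₂]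
    [NormedAddCommGroup M₁] [InnerProductSpace ℂ M₁] [CompleteSpace M₁]
    [NormedAddCommGroup M₂] [InnerProductSpace ℂ M₂] [CompleteSpace M₂]
    (A : K₁ →L[ℂ] K₂) (B : M₁ →L[ℂ] K₂) (C : K₁ →L[ℂ] M₂) (D : M₁ →L[ℂ] M₂)
    (hV : ∀ (k : K₁) (m : M₁),
      ‖A k + B m‖ ^ 2 + ‖C k + D m‖ ^ 2 = ‖k‖ ^ 2 + ‖m‖ ^ 2)
    (Z : M₂ →L[ℂ] M₁) (hZ : ‖Z‖ < 1) :
    IsUnit (1 - D ∘L Z) ∧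
      ‖A + B ∘L Z ∘L Ring.inverse (1 - D ∘L Z) ∘L C‖ ≤ 1 :=
  stmt_1_general A B C D hV Z hZ
end

section
/- Let E₁, E₂, F₁, F₂ be complex Banach spaces and let A : E₁ → E₂, B : F₁ → E₂, C : E₁ → F₂, D : F₁ → F₂, Z : F₂ → F₁ be bounded linear operators with ‖D Z‖ < 1. For every integer k ≥ 1, the Bochner integral (1/2π) ∫₀^{2π} e^{−i k θ} ( A + B (e^{i θ} Z) (1 − D (e^{i θ} Z))⁻¹ C ) dθ, taken in the Banach space B(E₁, E₂), equals B Z (D Z)^{k−1} C. -/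
/-!
Expanding the resolvent in its Neumann series, the integrand is `e^{-ikθ}` times the absolutely
convergent series `∑ₙ e^{inθ} cₙ` with `c₀ = A` and `cₙ₊₁ = B Z (D Z)ⁿ C`. Integrating term by
term (dominated convergence), the orthogonality of the characters `e^{imθ}` on `[0, 2π]` keeps
only the term `n = k`.
-/

open ContinuousLinearMap Complex
open scoped Real

theorem integral_exp_int_mul_mul_I (m : ℤ) :
    ∫ θ in (0 : ℝ)..2 * π, exp (m * θ * I) = if m = 0 then ((2 * π : ℝ) : ℂ) else 0 := by
  split_ifs with hm
  · simp [hm]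
  · have hmI : (m : ℂ) * I ≠ 0 := by simp [hm, I_ne_zero]
    simp_rw [mul_right_comm _ _ I]
    rw [integral_exp_mul_complex hmI]
    have hperiod : (m : ℂ) * I * ((2 * π : ℝ) : ℂ) = m * (2 * π * I) := by push_cast; ring
    rw [hperiod, exp_int_mul_two_pi_mul_I]
    simp

theorem one_div_two_pi_smul_integral_exp_smul_of_hasSum {E : Type*} [NormedAddCommGroup E]
    [NormedSpace ℂ E] [CompleteSpace E] {c : ℕ → E} {f : ℝ → E}
    (hc : Summable fun n ↦ ‖c n‖) (hf : ∀ θ : ℝ, HasSum (fun n ↦ exp (θ * I) ^ n • c n) (f θ))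
    (k : ℕ) :
    (1 / (2 * π)) • ∫ θ in (0 : ℝ)..2 * π, exp (-(k * θ) * I) • f θ = c k := by
  have hterm : ∀ (n : ℕ) (θ : ℝ),
      exp (-(k * θ) * I) • exp (θ * I) ^ n • c n = exp (((n - k : ℤ) : ℂ) * θ * I) • c n := by
    intro n θ
    rw [smul_smul, ← exp_nat_mul, ← exp_add]
    push_cast
    ring_nf
  have hsum : HasSum (fun n : ℕ ↦ ∫ θ in (0 : ℝ)..2 * π, exp (((n - k : ℤ) : ℂ) * θ * I) • c n)
      (∫ θ in (0 : ℝ)..2 * π, exp (-(k * θ) * I) • f θ) := by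
    refine intervalIntegral.hasSum_integral_of_dominated_convergence (fun n _ ↦ ‖c n‖)
      (fun n ↦ by fun_prop) (fun n ↦ .of_forall fun θ _ ↦ ?_) (.of_forall fun _ _ ↦ hc)
      intervalIntegrable_const (.of_forall fun θ _ ↦ ?_)
    · simp [norm_smul, norm_exp]
    · simpa only [hterm] using (hf θ).const_smul (exp (-(k * θ) * I))
  have hcoeff : ∀ n : ℕ, ∫ θ in (0 : ℝ)..2 * π, exp (((n - k : ℤ) : ℂ) * θ * I) • c n =
      if n = k then ((2 * π : ℝ) : ℂ) • c k else 0 := by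
    intro n
    rw [intervalIntegral.integral_smul_const, integral_exp_int_mul_mul_I]
    split_ifs with h1 h2 h2 <;> first | omega | simp [h2]
  rw [funext hcoeff] at hsum
  rw [hsum.unique (hasSum_ite_eq k _), coe_smul, smul_smul, one_div,
    inv_mul_cancel₀ Real.two_pi_pos.ne', one_smul]

section Realization

variable {E₁ E₂ F₁ F₂ : Type*}
  [NormedAddCommGroup E₁] [NormedSpace ℂ E₁] [NormedAddCommGroup E₂] [NormedSpace ℂ E₂]
  [NormedAddCommGroup F₁] [NormedSpace ℂ F₁] [NormedAddCommGroup F₂] [NormedSpace ℂ F₂]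

theorem hasSum_pow_succ_smul_comp_inverse [CompleteSpace F₂] (B : F₁ →L[ℂ] E₂)
    (C : E₁ →L[ℂ] F₂) (D : F₁ →L[ℂ] F₂) (Z : F₂ →L[ℂ] F₁) {z : ℂ} (hz : ‖z • (D ∘L Z)‖ < 1) :
    HasSum (fun n ↦ z ^ (n + 1) • (B ∘L Z ∘L ((D ∘L Z) ^ n) ∘L C))
      (B ∘L (z • Z) ∘L Ring.inverse (1 - D ∘L (z • Z)) ∘L C) := by
  let Φ : (F₂ →L[ℂ] F₂) →L[ℂ] E₁ →L[ℂ] E₂ :=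
    (compL ℂ E₁ F₂ E₂ (B ∘L (z • Z))).comp ((compL ℂ E₁ F₂ F₂).flip C)
  convert (hasSum_geom_series_inverse _ hz).mapL Φ using 1
  · ext1 n
    simp [Φ, smul_pow, pow_succ, mul_smul, comp_assoc]
  · simp [Φ, comp_assoc]

theorem summable_norm_comp_pow_comp {G : Type*} [NormedAddCommGroup G] [NormedSpace ℂ G]
    (L : F₂ →L[ℂ] G) (T : F₂ →L[ℂ] F₂) (R : E₁ →L[ℂ] F₂) (hT : ‖T‖ < 1) :
    Summable fun n ↦ ‖L ∘L (T ^ n) ∘L R‖ := by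
  refine .of_nonneg_of_le (fun n ↦ norm_nonneg _) (fun n ↦ ?_)
    (((summable_norm_geometric_of_norm_lt_one hT).mul_left ‖L‖).mul_right ‖R‖)
  calc ‖L ∘L (T ^ n) ∘L R‖ ≤ ‖L‖ * (‖T ^ n‖ * ‖R‖) :=
        (opNorm_comp_le _ _).trans (by gcongr; exact opNorm_comp_le _ _)
    _ = ‖L‖ * ‖T ^ n‖ * ‖R‖ := by ring

end Realization

theorem stmt_4_general {E₁ E₂ F₁ F₂ : Type*}
    [NormedAddCommGroup E₁] [NormedSpace ℂ E₁]
    [NormedAddCommGroup E₂] [NormedSpace ℂ E₂] [CompleteSpace E₂]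
    [NormedAddCommGroup F₁] [NormedSpace ℂ F₁]
    [NormedAddCommGroup F₂] [NormedSpace ℂ F₂] [CompleteSpace F₂]
    (A : E₁ →L[ℂ] E₂) (B : F₁ →L[ℂ] E₂) (C : E₁ →L[ℂ] F₂) (D : F₁ →L[ℂ] F₂)
    (Z : F₂ →L[ℂ] F₁) (hDZ : ‖D ∘L Z‖ < 1) (k : ℕ) (hk : 1 ≤ k) :
    (1 / (2 * Real.pi)) •
        ∫ θ in (0 : ℝ)..(2 * Real.pi),
          Complex.exp (-((k : ℂ) * (θ : ℂ)) * Complex.I) •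
            (A + B ∘L (Complex.exp ((θ : ℂ) * Complex.I) • Z) ∘L
              Ring.inverse (1 - D ∘L (Complex.exp ((θ : ℂ) * Complex.I) • Z)) ∘L C) =
      B ∘L Z ∘L ((D ∘L Z) ^ (k - 1)) ∘L C := by
  let c : ℕ → E₁ →L[ℂ] E₂ := fun n ↦ if n = 0 then A else B ∘L Z ∘L ((D ∘L Z) ^ (n - 1)) ∘L C
  have hc : Summable fun n ↦ ‖c n‖ := by
    rw [← summable_nat_add_iff 1]
    simpa [c, comp_assoc] using summable_norm_comp_pow_comp (B ∘L Z) (D ∘L Z) C hDZ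
  have hf : ∀ θ : ℝ, HasSum (fun n ↦ exp (θ * I) ^ n • c n)
      (A + B ∘L (exp (θ * I) • Z) ∘L Ring.inverse (1 - D ∘L (exp (θ * I) • Z)) ∘L C) := by
    intro θ
    have hz : ‖exp (θ * I) • (D ∘L Z)‖ < 1 := by rwa [norm_smul, norm_exp_ofReal_mul_I, one_mul]
    rw [← hasSum_nat_add_iff' 1]
    simpa [c] using hasSum_pow_succ_smul_comp_inverse B C D Z hz
  rw [one_div_two_pi_smul_integral_exp_smul_of_hasSum hc hf k]
  exact if_neg (by omega)

/-- Fourier-coefficient extraction (eq. (3.21)) used in the proof of Theorem 3.3: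
for `‖D Z‖ < 1` and `k ≥ 1`,
`(1/2π) ∫₀^{2π} e^{-ikθ} (A + B (e^{iθ} Z)(1 - D (e^{iθ} Z))⁻¹ C) dθ = B Z (D Z)^{k-1} C`,
the integral being a Bochner (interval) integral valued in `B(E₁, E₂)`. -/
theorem stmt_4 {E₁ E₂ F₁ F₂ : Type*}
    [NormedAddCommGroup E₁] [NormedSpace ℂ E₁] [CompleteSpace E₁]
    [NormedAddCommGroup E₂] [NormedSpace ℂ E₂] [CompleteSpace E₂]
    [NormedAddCommGroup F₁] [NormedSpace ℂ F₁] [CompleteSpace F₁]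
    [NormedAddCommGroup F₂] [NormedSpace ℂ F₂] [CompleteSpace F₂]
    (A : E₁ →L[ℂ] E₂) (B : F₁ →L[ℂ] E₂) (C : E₁ →L[ℂ] F₂) (D : F₁ →L[ℂ] F₂)
    (Z : F₂ →L[ℂ] F₁) (hDZ : ‖D ∘L Z‖ < 1) (k : ℕ) (hk : 1 ≤ k) :
    (1 / (2 * Real.pi)) •
        ∫ θ in (0 : ℝ)..(2 * Real.pi),
          Complex.exp (-((k : ℂ) * (θ : ℂ)) * Complex.I) •
            (A + B ∘L (Complex.exp ((θ : ℂ) * Complex.I) • Z) ∘L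
              Ring.inverse (1 - D ∘L (Complex.exp ((θ : ℂ) * Complex.I) • Z)) ∘L C) =
      B ∘L Z ∘L ((D ∘L Z) ^ (k - 1)) ∘L C :=
  stmt_4_general A B C D Z hDZ k hk
end

section
/- For every n ≥ 1 and all n×n complex matrices A and B, the operator norm (from ℓ²_n) of A B − B A − 1 is at least 1, where 1 is the n×n identity matrix. -/
/-!
A commutator has trace zero, so `A B - B A - 1` has trace `-n`. On the other hand every entry
`M i j`, being a coordinate of `M eⱼ`, is bounded by the operator norm of `M`, so `|tr M| ≤ n ‖M‖`.
-/

open Matrix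

namespace Matrix

variable {𝕜 ι : Type*} [RCLike 𝕜] [Fintype ι] [DecidableEq ι]

theorem norm_apply_le_norm_toEuclideanCLM (M : Matrix ι ι 𝕜) (i j : ι) :
    ‖M i j‖ ≤ ‖toEuclideanCLM (𝕜 := 𝕜) (n := ι) M‖ := by
  set T := toEuclideanCLM (𝕜 := 𝕜) (n := ι) M
  set e : EuclideanSpace 𝕜 ι := EuclideanSpace.single j 1
  have hcol : T e i = M i j := by
    simp [T, e, ← PiLp.toLp_single, toEuclideanCLM_toLp]
  calc ‖M i j‖ = ‖T e i‖ := by rw [hcol]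
    _ ≤ ‖T e‖ := PiLp.norm_apply_le _ i
    _ ≤ ‖T‖ * ‖e‖ := T.le_opNorm e
    _ = ‖T‖ := by simp [e]

theorem norm_trace_le_card_mul_norm_toEuclideanCLM (M : Matrix ι ι 𝕜) :
    ‖M.trace‖ ≤ Fintype.card ι * ‖toEuclideanCLM (𝕜 := 𝕜) (n := ι) M‖ := by
  calc ‖M.trace‖ ≤ ∑ i, ‖M i i‖ := norm_sum_le _ _
    _ ≤ ∑ _i : ι, ‖toEuclideanCLM (𝕜 := 𝕜) (n := ι) M‖ :=
      Finset.sum_le_sum fun i _ => norm_apply_le_norm_toEuclideanCLM M i i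
    _ = Fintype.card ι * ‖toEuclideanCLM (𝕜 := 𝕜) (n := ι) M‖ := by simp

end Matrix

/-- Key computation of Example 8.4: for all `n × n` complex matrices `A` and `B`, the
operator norm (from `ℓ²ₙ`) of `A B - B A - 1` is at least `1`. -/
theorem stmt_10 (n : ℕ) (hn : 1 ≤ n) (A B : Matrix (Fin n) (Fin n) ℂ) :
    1 ≤ ‖Matrix.toEuclideanCLM (𝕜 := ℂ) (n := Fin n) (A * B - B * A - 1)‖ := by
  have htrace : (A * B - B * A - 1).trace = -(n : ℂ) := by
    simp [trace_sub, trace_mul_comm A B]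
  have h := norm_trace_le_card_mul_norm_toEuclideanCLM (A * B - B * A - 1)
  rw [htrace, norm_neg, Complex.norm_natCast, Fintype.card_fin] at h
  have hn_pos : (0 : ℝ) < n := by exact_mod_cast hn
  exact le_of_mul_le_mul_left (by simpa using h) hn_pos
end
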